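/- Block-circulant structure of the Gang-of-Four: for square tensors 𝒢, ℋ of the same size with I + ℋ * 𝒢 T-invertible, there exists a permutation matrix P such that bcirc(𝒢 ~# ℋ) = Pᵀ · (bcirc(𝒢) ~# bcirc(ℋ)) · P, where M ~# N denotes the 2×2 block matrix [[(I+NM)^{-1}, (I+NM)^{-1}N],[M(I+NM)^{-1}, M(I+NM)^{-1}N]] and 𝒢 ~# ℋ the analogous block tensor under the T-product. -/

import Mathlib

/-! Since `bcirc` turns T-products into matrix products, `bcirc 𝒦` is the inverse of
`1 + bcirc ℋ * bcirc 𝒢`, so every block of the tensor Gang-of-Four embeds as the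
corresponding block of the matrix Gang-of-Four. The embedding of a block tensor is the
block matrix of the embeddings once the index `Fin p × (α ⊕ β)` is redistributed as
`(Fin p × α) ⊕ (Fin p × β)`. -/

open Matrix

/-- Block-circulant embedding of a third-order tensor given by its frontal slices
(rows/columns of each slice indexed by arbitrary finite types). -/
def bcirc {m n : Type*} {p : ℕ} (A : Fin p → Matrix m n ℂ) :
    Matrix (Fin p × m) (Fin p × n) ℂ :=
  Matrix.of fun x y => A (x.1 - y.1) x.2 y.2

/-- Unfolding of a tensor: stacking of its frontal slices. -/
def unfold {n s : Type*} {p : ℕ} (B : Fin p → Matrix n s ℂ) :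
    Matrix (Fin p × n) s ℂ :=
  Matrix.of fun x c => B x.1 x.2 c

/-- The T-product `𝒜 * 𝒝 = fold (bcirc 𝒜 · unfold 𝒝)`, expressed slice-wise. -/
noncomputable def tProd {m n s : Type*} [Fintype n] {p : ℕ}
    (A : Fin p → Matrix m n ℂ) (B : Fin p → Matrix n s ℂ) :
    Fin p → Matrix m s ℂ :=
  fun k => Matrix.of fun r c => (bcirc A * unfold B) (k, r) c

/-- The identity tensor `ℐ`, characterized by `bcirc ℐ = I`. -/
def idT {n : Type*} [Fintype n] [DecidableEq n] {p : ℕ} [NeZero p] :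
    Fin p → Matrix n n ℂ :=
  fun k => if k = 0 then 1 else 0

/-- The Gang-of-Four of two square matrices `M, N`:
`[[(I+NM)⁻¹, (I+NM)⁻¹N], [M(I+NM)⁻¹, M(I+NM)⁻¹N]]`. -/
noncomputable def gangOfFour {α : Type*} [Fintype α] [DecidableEq α]
    (M N : Matrix α α ℂ) : Matrix (α ⊕ α) (α ⊕ α) ℂ :=
  Matrix.fromBlocks (1 + N * M)⁻¹ ((1 + N * M)⁻¹ * N)
    (M * (1 + N * M)⁻¹) (M * (1 + N * M)⁻¹ * N)

section Bcirc

variable {p : ℕ}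

lemma bcirc_add {m n : Type*} (A B : Fin p → Matrix m n ℂ) :
    bcirc (A + B) = bcirc A + bcirc B := by
  ext ⟨k, r⟩ ⟨l, c⟩
  simp [bcirc]

lemma bcirc_idT {n : Type*} [Fintype n] [DecidableEq n] [NeZero p] :
    bcirc (idT : Fin p → Matrix n n ℂ) = 1 := by
  ext ⟨k, r⟩ ⟨l, c⟩
  simp only [bcirc, idT, of_apply, one_apply, sub_eq_zero, Prod.mk.injEq]
  by_cases h : k = l <;> simp [h, one_apply]

lemma bcirc_tProd {m n s : Type*} [Fintype n] [NeZero p]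
    (A : Fin p → Matrix m n ℂ) (B : Fin p → Matrix n s ℂ) :
    bcirc (tProd A B) = bcirc A * bcirc B := by
  ext ⟨k, r⟩ ⟨l, c⟩
  simp only [bcirc, tProd, unfold, mul_apply, of_apply]
  rw [← (Equiv.prodCongr (Equiv.subRight l) (Equiv.refl n)).sum_comp]
  refine Fintype.sum_congr _ _ fun ⟨j, t⟩ => ?_
  simp [sub_sub_sub_cancel_right]

lemma bcirc_fromBlocks {l m n o : Type*} (A : Fin p → Matrix n l ℂ)
    (B : Fin p → Matrix n m ℂ) (C : Fin p → Matrix o l ℂ) (D : Fin p → Matrix o m ℂ) :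
    bcirc (fun k => fromBlocks (A k) (B k) (C k) (D k)) =
      (fromBlocks (bcirc A) (bcirc B) (bcirc C) (bcirc D)).submatrix
        (Equiv.prodSumDistrib _ _ _) (Equiv.prodSumDistrib _ _ _) := by
  ext ⟨k, i | i⟩ ⟨l, j | j⟩ <;> rfl

end Bcirc

lemma gangOfFour_eq_fromBlocks_of_mul_eq_one {α : Type*} [Fintype α] [DecidableEq α]
    {M N K : Matrix α α ℂ} (hK : (1 + N * M) * K = 1) :
    gangOfFour M N = fromBlocks K (K * N) (M * K) (M * K * N) := by
  rw [gangOfFour, inv_eq_right_inv hK]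

theorem bcirc_gangOfFour_general {m p : ℕ} [NeZero p]
    (G H K : Fin p → Matrix (Fin m) (Fin m) ℂ)
    (hK1 : tProd (idT + tProd H G) K = idT) :
    ∃ e : (Fin p × (Fin m ⊕ Fin m)) ≃ ((Fin p × Fin m) ⊕ (Fin p × Fin m)),
      bcirc (fun k => Matrix.fromBlocks (K k) (tProd K H k)
          (tProd G K k) (tProd G (tProd K H) k)) =
        (gangOfFour (bcirc G) (bcirc H)).submatrix e e := by
  have hK : (1 + bcirc H * bcirc G) * bcirc K = 1 := by
    simpa only [bcirc_tProd, bcirc_add, bcirc_idT] using congrArg bcirc hK1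
  refine ⟨Equiv.prodSumDistrib _ _ _, ?_⟩
  rw [bcirc_fromBlocks, gangOfFour_eq_fromBlocks_of_mul_eq_one hK]
  simp only [bcirc_tProd, Matrix.mul_assoc]

/-- for square tensors `𝒢, ℋ` with `ℐ + ℋ * 𝒢` T-invertible (with
T-inverse `𝒦`), the block-circulant embedding of the tensor Gang-of-Four
(whose blocks are `𝒦`, `𝒦 * ℋ`, `𝒢 * 𝒦`, `𝒢 * 𝒦 * ℋ`) coincides, up to a
permutation `P` of rows and columns (`Pᵀ · (—) · P`, realized as `submatrix e e` for
an equivalence `e`), with the matrix Gang-of-Four of `bcirc 𝒢` and `bcirc ℋ`. -/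
theorem bcirc_gangOfFour {m p : ℕ} [NeZero p]
    (G H K : Fin p → Matrix (Fin m) (Fin m) ℂ)
    (hK1 : tProd (idT + tProd H G) K = idT)
    (hK2 : tProd K (idT + tProd H G) = idT) :
    ∃ e : (Fin p × (Fin m ⊕ Fin m)) ≃ ((Fin p × Fin m) ⊕ (Fin p × Fin m)),
      bcirc (fun k => Matrix.fromBlocks (K k) (tProd K H k)
          (tProd G K k) (tProd G (tProd K H) k)) =
        (gangOfFour (bcirc G) (bcirc H)).submatrix e e :=
  bcirc_gangOfFour_general G H K hK1
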